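/- arXiv:1205.2740 — 3 statements merged into one kernel-verified Lean document; each statement's English description precedes it below -/
import Mathlib

section
/- Let ι be a finite type, let v b : ι → ℝ, and let μ σ be finite subsets of ι. Suppose (a) ∑_{i ∈ μ} b i ≥ ∑_{j ∈ σ} b j, (b) b i ≤ v i for all i ∈ μ \ σ, (c) v j ≤ b j for all j ∈ σ \ μ, and (d) σ maximizes total value in the sense that ∑_{j ∈ σ} v j ≥ ∑_{i ∈ μ} v i. Then ∑_{i ∈ μ} v i = ∑_{j ∈ σ} v j. -/
/-! Exchanging the bidders of `μ \ σ` for those of `σ \ μ` loses bid, and for conservative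
winners and truthful-or-overbidding losers it loses at least as much value; so `μ` is at
least as valuable as `σ`, and the optimality of `σ` forces equality. -/

open Finset

theorem Finset.sum_le_sum_of_le_on_sdiff {ι M : Type*} [DecidableEq ι] [AddCommGroup M]
    [PartialOrder M] [IsOrderedAddMonoid M] {s t : Finset ι} {f g : ι → M}
    (hg : ∑ i ∈ t, g i ≤ ∑ i ∈ s, g i) (hs : ∀ i ∈ s \ t, g i ≤ f i)
    (ht : ∀ i ∈ t \ s, f i ≤ g i) : ∑ i ∈ t, f i ≤ ∑ i ∈ s, f i := by
  rw [← sub_nonpos, ← sum_sdiff_sub_sum_sdiff]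
  calc ∑ i ∈ t \ s, f i - ∑ i ∈ s \ t, f i
      ≤ ∑ i ∈ t \ s, g i - ∑ i ∈ s \ t, g i := sub_le_sub (sum_le_sum ht) (sum_le_sum hs)
    _ = ∑ i ∈ t, g i - ∑ i ∈ s, g i := sum_sdiff_sub_sum_sdiff
    _ ≤ 0 := sub_nonpos.mpr hg

theorem mpp_conservative_poa_one_general {ι : Type*} [DecidableEq ι]
    (v b : ι → ℝ) (μ σ : Finset ι)
    (hbids : ∑ i ∈ μ, b i ≥ ∑ j ∈ σ, b j)
    (hconservative : ∀ i ∈ μ \ σ, b i ≤ v i)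
    (hlosers : ∀ j ∈ σ \ μ, v j ≤ b j)
    (hopt : ∑ j ∈ σ, v j ≥ ∑ i ∈ μ, v i) :
    ∑ i ∈ μ, v i = ∑ j ∈ σ, v j :=
  le_antisymm hopt (Finset.sum_le_sum_of_le_on_sdiff hbids hconservative hlosers)

/-- With conservative bidders, the MPP_CA allocation μ has the same total value
as the efficiency-maximizing (VCG) allocation σ: the price of anarchy is 1. -/
theorem mpp_conservative_poa_one {ι : Type*} [Fintype ι] [DecidableEq ι]
    (v b : ι → ℝ) (μ σ : Finset ι)
    (hbids : ∑ i ∈ μ, b i ≥ ∑ j ∈ σ, b j)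
    (hconservative : ∀ i ∈ μ \ σ, b i ≤ v i)
    (hlosers : ∀ j ∈ σ \ μ, v j ≤ b j)
    (hopt : ∑ j ∈ σ, v j ≥ ∑ i ∈ μ, v i) :
    ∑ i ∈ μ, v i = ∑ j ∈ σ, v j :=
  mpp_conservative_poa_one_general v b μ σ hbids hconservative hlosers hopt
end

section
/- Let k ≥ 2 be a natural number, let b : ℕ → ℝ satisfy b i ≥ 0 for all i, let p : ℕ → ℝ, and let S : ℝ. Suppose p 1 ≥ max (b 2) (S − ∑_{i=2}^{k} b i), and p i ≥ b (i+1) for every i with 2 ≤ i ≤ k. Then ∑_{i=1}^{k} p i ≥ S/2. -/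
/-!
Write `B = ∑_{i=2}^k b i` and `T = ∑_{i=2}^k p i`. Since `p i ≥ b (i+1)` and the bids are
nonnegative, `T ≥ ∑_{i=3}^{k+1} b i`, which is at least both `0` and `B - b 2`. Bounding the
revenue `p 1 + T` from below once by `b 2 + (B - b 2) = B` and once by `(S - B) + 0` and adding,
twice the revenue is at least `S`.
-/

open Finset

theorem sum_Icc_comp_add_one {M : Type*} [AddCommMonoid M] (f : ℕ → M) (m n : ℕ) :
    ∑ i ∈ Icc m n, f (i + 1) = ∑ i ∈ Icc (m + 1) (n + 1), f i := by
  rw [← map_add_right_Icc, sum_map]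
  rfl

theorem sum_Icc_sub_le_sum_Icc_comp_add_one {M : Type*} [AddCommGroup M] [PartialOrder M]
    [IsOrderedAddMonoid M] {f : ℕ → M} (hf : ∀ i, 0 ≤ f i) {m n : ℕ} (hmn : m ≤ n) :
    ∑ i ∈ Icc m n, f i - f m ≤ ∑ i ∈ Icc m n, f (i + 1) := by
  rw [← add_sum_Ioc_eq_sum_Icc hmn, ← Icc_add_one_left_eq_Ioc, sum_Icc_comp_add_one,
    add_sub_cancel_left]
  exact sum_le_sum_of_subset_of_nonneg (Icc_subset_Icc_right n.le_succ) fun i _ _ => hf i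

/-- Revenue lower bound for the MPP cardinal auction: if the top winner pays at
least `max (b 2) (S - ∑_{i=2}^k b i)` and each other winner `i` (for `2 ≤ i ≤ k`)
pays at least `b (i+1)`, with all bids nonnegative, then the total payment
`∑_{i=1}^k p i` is at least `S / 2`. -/
theorem mpp_revenue_lower_bound (k : ℕ) (hk : 2 ≤ k) (b p : ℕ → ℝ) (S : ℝ)
    (hb : ∀ i, 0 ≤ b i)
    (hp1 : p 1 ≥ max (b 2) (S - ∑ i ∈ Finset.Icc 2 k, b i))
    (hpi : ∀ i, 2 ≤ i → i ≤ k → p i ≥ b (i + 1)) :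
    ∑ i ∈ Finset.Icc 1 k, p i ≥ S / 2 := by
  obtain ⟨hp1_bid, hp1_excluded⟩ := max_le_iff.mp hp1
  have hsplit : ∑ i ∈ Icc 1 k, p i = p 1 + ∑ i ∈ Icc 2 k, p i := by
    rw [← add_sum_Ioc_eq_sum_Icc (by omega : 1 ≤ k), ← Icc_add_one_left_eq_Ioc]
    rfl
  have htail : ∑ i ∈ Icc 2 k, b (i + 1) ≤ ∑ i ∈ Icc 2 k, p i :=
    sum_le_sum fun i hi => hpi i (mem_Icc.mp hi).1 (mem_Icc.mp hi).2
  have htail_nonneg : 0 ≤ ∑ i ∈ Icc 2 k, b (i + 1) := sum_nonneg fun i _ => hb (i + 1)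
  have htail_shift : ∑ i ∈ Icc 2 k, b i - b 2 ≤ ∑ i ∈ Icc 2 k, b (i + 1) :=
    sum_Icc_sub_le_sum_Icc_comp_add_one hb hk
  linarith
end

section
/- Fix a real ε with 0 < ε ≤ 50. Over ι = Fin 3, let the cardinality constraints be k = (1, 2, 2), the values v = (100, 50, ε), and the bids b = (100, 100, 50). Call a finite subset A of Fin 3 feasible if every i ∈ A satisfies A.card ≤ k i. Then: (i) the maximum of ∑_{i ∈ A} v i over all feasible A equals 100, attained by the singleton {0}; (ii) the feasible set maximizing ∑_{i ∈ A} b i is {1, 2}, with bid-sum 150; and (iii) ∑_{i ∈ {1,2}} v i = 50 + ε. -/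
/-- An allocation `A` is feasible for cardinality constraints `k` if every
bidder in `A` tolerates an allocation of size `A.card`. -/
def Feasible (k : Fin 3 → ℕ) (A : Finset (Fin 3)) : Prop :=
  ∀ i ∈ A, A.card ≤ k i

/-!
Bidder 0 accepts only singleton allocations, so the feasible allocations are `∅`, the three
singletons and `{1, 2}`. Comparing the five value sums and the five bid sums gives the claim.
-/

theorem feasible_one_two_two_iff (A : Finset (Fin 3)) :
    Feasible ![1, 2, 2] A ↔ A = ∅ ∨ A = {0} ∨ A = {1} ∨ A = {2} ∨ A = {1, 2} := by
  unfold Feasible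
  revert A
  decide

theorem mpp_poa_tightness_general (ε : ℝ) (hε : ε ≤ 50)
    (k : Fin 3 → ℕ) (hk : k = ![1, 2, 2])
    (v : Fin 3 → ℝ) (hv : v = ![100, 50, ε])
    (b : Fin 3 → ℝ) (hb : b = ![100, 100, 50]) :
    (Feasible k {0} ∧ ∑ i ∈ ({0} : Finset (Fin 3)), v i = 100 ∧
      ∀ A : Finset (Fin 3), Feasible k A → ∑ i ∈ A, v i ≤ 100) ∧
    (Feasible k {1, 2} ∧ ∑ i ∈ ({1, 2} : Finset (Fin 3)), b i = 150 ∧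
      ∀ A : Finset (Fin 3), Feasible k A →
        ∑ i ∈ A, b i ≤ 150 ∧ (∑ i ∈ A, b i = 150 → A = {1, 2})) ∧
    ∑ i ∈ ({1, 2} : Finset (Fin 3)), v i = 50 + ε := by
  subst hk hv hb
  have pair_sum (w : Fin 3 → ℝ) : ∑ i ∈ ({1, 2} : Finset (Fin 3)), w i = w 1 + w 2 :=
    Finset.sum_pair (by decide)
  refine ⟨⟨by simp [feasible_one_two_two_iff], by simp, fun A hA => ?_⟩,
    ⟨by simp [feasible_one_two_two_iff], by norm_num [pair_sum, Matrix.cons_val_two],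
      fun A hA => ?_⟩,
    by norm_num [pair_sum, Matrix.cons_val_two]⟩
  · rcases (feasible_one_two_two_iff A).1 hA with rfl | rfl | rfl | rfl | rfl <;>
      norm_num [pair_sum, Matrix.cons_val_two] <;> linarith
  · rcases (feasible_one_two_two_iff A).1 hA with rfl | rfl | rfl | rfl | rfl <;>
      norm_num [pair_sum, Matrix.cons_val_two]

/-- Tightness of the PoA bound 2 for MPP_CA with rational bidders: with
constraints (1,2,2), values (100,50,ε) and bids (100,100,50), the efficient
value is 100 (attained by {0}), the unique bid-maximizing feasible set is
{1,2} with bid-sum 150, and its total value is only 50 + ε. -/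
theorem mpp_poa_tightness (ε : ℝ) (hε0 : 0 < ε) (hε : ε ≤ 50)
    (k : Fin 3 → ℕ) (hk : k = ![1, 2, 2])
    (v : Fin 3 → ℝ) (hv : v = ![100, 50, ε])
    (b : Fin 3 → ℝ) (hb : b = ![100, 100, 50]) :
    (Feasible k {0} ∧ ∑ i ∈ ({0} : Finset (Fin 3)), v i = 100 ∧
      ∀ A : Finset (Fin 3), Feasible k A → ∑ i ∈ A, v i ≤ 100) ∧
    (Feasible k {1, 2} ∧ ∑ i ∈ ({1, 2} : Finset (Fin 3)), b i = 150 ∧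
      ∀ A : Finset (Fin 3), Feasible k A →
        ∑ i ∈ A, b i ≤ 150 ∧ (∑ i ∈ A, b i = 150 → A = {1, 2})) ∧
    ∑ i ∈ ({1, 2} : Finset (Fin 3)), v i = 50 + ε :=
  mpp_poa_tightness_general ε hε k hk v hv b hb
end
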